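/- Let R be an algebraic curvature tensor on ℝ^3 (satisfying R_{ijkl} = −R_{jikl} = −R_{ijlk}, R_{ijkl} = R_{klij}, and the first Bianchi identity). Then Σ R_{ijji}·R_{kllk} − 4·Σ R_{aija}·R_{bijb} + Σ R_{ijkl}·R_{ijkl} = 0, where all sums range over indices in {1,2,3}. -/
import Mathlib


/-- The universal curvature identity in dimension 3:
`τ² − 4|ρ|² + |R|² = 0` for any algebraic curvature tensor on ℝ³. -/
theorem curvature_identity_dim_three
    (R : Fin 3 → Fin 3 → Fin 3 → Fin 3 → ℝ)
    (h1 : ∀ i j k l, R i j k l = - R j i k l)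
    (h2 : ∀ i j k l, R i j k l = - R i j l k)
    (h3 : ∀ i j k l, R i j k l = R k l i j)
    (hB : ∀ i j k l, R i j k l + R j k i l + R k i j l = 0) :
    (∑ i : Fin 3, ∑ j : Fin 3, ∑ k : Fin 3, ∑ l : Fin 3, R i j j i * R k l l k)
      - 4 * (∑ a : Fin 3, ∑ b : Fin 3, ∑ i : Fin 3, ∑ j : Fin 3, R a i j a * R b i j b)
      + (∑ i : Fin 3, ∑ j : Fin 3, ∑ k : Fin 3, ∑ l : Fin 3, R i j k l * R i j k l) = 0 := by
  have e0000 : R 0 0 0 0 = 0 := by linarith [h1 0 0 0 0]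
  have e0001 : R 0 0 0 1 = 0 := by linarith [h1 0 0 0 1]
  have e0002 : R 0 0 0 2 = 0 := by linarith [h1 0 0 0 2]
  have e0010 : R 0 0 1 0 = 0 := by linarith [h1 0 0 1 0]
  have e0011 : R 0 0 1 1 = 0 := by linarith [h1 0 0 1 1]
  have e0012 : R 0 0 1 2 = 0 := by linarith [h1 0 0 1 2]
  have e0020 : R 0 0 2 0 = 0 := by linarith [h1 0 0 2 0]
  have e0021 : R 0 0 2 1 = 0 := by linarith [h1 0 0 2 1]
  have e0022 : R 0 0 2 2 = 0 := by linarith [h1 0 0 2 2]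
  have e0100 : R 0 1 0 0 = 0 := by linarith [h2 0 1 0 0]
  have e0110 : R 0 1 1 0 = - R 0 1 0 1 := by rw [h2 0 1 1 0]; all_goals ring
  have e0111 : R 0 1 1 1 = 0 := by linarith [h2 0 1 1 1]
  have e0120 : R 0 1 2 0 = - R 0 1 0 2 := by rw [h2 0 1 2 0]; all_goals ring
  have e0121 : R 0 1 2 1 = - R 0 1 1 2 := by rw [h2 0 1 2 1]; all_goals ring
  have e0122 : R 0 1 2 2 = 0 := by linarith [h2 0 1 2 2]
  have e0200 : R 0 2 0 0 = 0 := by linarith [h2 0 2 0 0]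
  have e0201 : R 0 2 0 1 = R 0 1 0 2 := by rw [h3 0 2 0 1]; all_goals ring
  have e0210 : R 0 2 1 0 = - R 0 1 0 2 := by rw [h2 0 2 1 0, h3 0 2 0 1]; all_goals ring
  have e0211 : R 0 2 1 1 = 0 := by linarith [h2 0 2 1 1]
  have e0220 : R 0 2 2 0 = - R 0 2 0 2 := by rw [h2 0 2 2 0]; all_goals ring
  have e0221 : R 0 2 2 1 = - R 0 2 1 2 := by rw [h2 0 2 2 1]; all_goals ring
  have e0222 : R 0 2 2 2 = 0 := by linarith [h2 0 2 2 2]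
  have e1000 : R 1 0 0 0 = 0 := by linarith [h2 1 0 0 0]
  have e1001 : R 1 0 0 1 = - R 0 1 0 1 := by rw [h1 1 0 0 1]; all_goals ring
  have e1002 : R 1 0 0 2 = - R 0 1 0 2 := by rw [h1 1 0 0 2]; all_goals ring
  have e1010 : R 1 0 1 0 = R 0 1 0 1 := by rw [h1 1 0 1 0, h2 0 1 1 0]; all_goals ring
  have e1011 : R 1 0 1 1 = 0 := by linarith [h2 1 0 1 1]
  have e1012 : R 1 0 1 2 = - R 0 1 1 2 := by rw [h1 1 0 1 2]; all_goals ring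
  have e1020 : R 1 0 2 0 = R 0 1 0 2 := by rw [h1 1 0 2 0, h2 0 1 2 0]; all_goals ring
  have e1021 : R 1 0 2 1 = R 0 1 1 2 := by rw [h1 1 0 2 1, h2 0 1 2 1]; all_goals ring
  have e1022 : R 1 0 2 2 = 0 := by linarith [h2 1 0 2 2]
  have e1100 : R 1 1 0 0 = 0 := by linarith [h1 1 1 0 0]
  have e1101 : R 1 1 0 1 = 0 := by linarith [h1 1 1 0 1]
  have e1102 : R 1 1 0 2 = 0 := by linarith [h1 1 1 0 2]
  have e1110 : R 1 1 1 0 = 0 := by linarith [h1 1 1 1 0]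
  have e1111 : R 1 1 1 1 = 0 := by linarith [h1 1 1 1 1]
  have e1112 : R 1 1 1 2 = 0 := by linarith [h1 1 1 1 2]
  have e1120 : R 1 1 2 0 = 0 := by linarith [h1 1 1 2 0]
  have e1121 : R 1 1 2 1 = 0 := by linarith [h1 1 1 2 1]
  have e1122 : R 1 1 2 2 = 0 := by linarith [h1 1 1 2 2]
  have e1200 : R 1 2 0 0 = 0 := by linarith [h2 1 2 0 0]
  have e1201 : R 1 2 0 1 = R 0 1 1 2 := by rw [h3 1 2 0 1]; all_goals ring
  have e1202 : R 1 2 0 2 = R 0 2 1 2 := by rw [h3 1 2 0 2]; all_goals ring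
  have e1210 : R 1 2 1 0 = - R 0 1 1 2 := by rw [h2 1 2 1 0, h3 1 2 0 1]; all_goals ring
  have e1211 : R 1 2 1 1 = 0 := by linarith [h2 1 2 1 1]
  have e1220 : R 1 2 2 0 = - R 0 2 1 2 := by rw [h2 1 2 2 0, h3 1 2 0 2]; all_goals ring
  have e1221 : R 1 2 2 1 = - R 1 2 1 2 := by rw [h2 1 2 2 1]; all_goals ring
  have e1222 : R 1 2 2 2 = 0 := by linarith [h2 1 2 2 2]
  have e2000 : R 2 0 0 0 = 0 := by linarith [h2 2 0 0 0]
  have e2001 : R 2 0 0 1 = - R 0 1 0 2 := by rw [h1 2 0 0 1, h3 0 2 0 1]; all_goals ring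
  have e2002 : R 2 0 0 2 = - R 0 2 0 2 := by rw [h1 2 0 0 2]; all_goals ring
  have e2010 : R 2 0 1 0 = R 0 1 0 2 := by rw [h1 2 0 1 0, h2 0 2 1 0, h3 0 2 0 1]; all_goals ring
  have e2011 : R 2 0 1 1 = 0 := by linarith [h2 2 0 1 1]
  have e2012 : R 2 0 1 2 = - R 0 2 1 2 := by rw [h1 2 0 1 2]; all_goals ring
  have e2020 : R 2 0 2 0 = R 0 2 0 2 := by rw [h1 2 0 2 0, h2 0 2 2 0]; all_goals ring
  have e2021 : R 2 0 2 1 = R 0 2 1 2 := by rw [h1 2 0 2 1, h2 0 2 2 1]; all_goals ring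
  have e2022 : R 2 0 2 2 = 0 := by linarith [h2 2 0 2 2]
  have e2100 : R 2 1 0 0 = 0 := by linarith [h2 2 1 0 0]
  have e2101 : R 2 1 0 1 = - R 0 1 1 2 := by rw [h1 2 1 0 1, h3 1 2 0 1]; all_goals ring
  have e2102 : R 2 1 0 2 = - R 0 2 1 2 := by rw [h1 2 1 0 2, h3 1 2 0 2]; all_goals ring
  have e2110 : R 2 1 1 0 = R 0 1 1 2 := by rw [h1 2 1 1 0, h2 1 2 1 0, h3 1 2 0 1]; all_goals ring
  have e2111 : R 2 1 1 1 = 0 := by linarith [h2 2 1 1 1]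
  have e2112 : R 2 1 1 2 = - R 1 2 1 2 := by rw [h1 2 1 1 2]; all_goals ring
  have e2120 : R 2 1 2 0 = R 0 2 1 2 := by rw [h1 2 1 2 0, h2 1 2 2 0, h3 1 2 0 2]; all_goals ring
  have e2121 : R 2 1 2 1 = R 1 2 1 2 := by rw [h1 2 1 2 1, h2 1 2 2 1]; all_goals ring
  have e2122 : R 2 1 2 2 = 0 := by linarith [h2 2 1 2 2]
  have e2200 : R 2 2 0 0 = 0 := by linarith [h1 2 2 0 0]
  have e2201 : R 2 2 0 1 = 0 := by linarith [h1 2 2 0 1]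
  have e2202 : R 2 2 0 2 = 0 := by linarith [h1 2 2 0 2]
  have e2210 : R 2 2 1 0 = 0 := by linarith [h1 2 2 1 0]
  have e2211 : R 2 2 1 1 = 0 := by linarith [h1 2 2 1 1]
  have e2212 : R 2 2 1 2 = 0 := by linarith [h1 2 2 1 2]
  have e2220 : R 2 2 2 0 = 0 := by linarith [h1 2 2 2 0]
  have e2221 : R 2 2 2 1 = 0 := by linarith [h1 2 2 2 1]
  have e2222 : R 2 2 2 2 = 0 := by linarith [h1 2 2 2 2]
  simp only [Fin.sum_univ_three, e0000, e0001, e0002, e0010, e0011, e0012, e0020, e0021, e0022, e0100, e0110, e0111, e0120, e0121, e0122, e0200, e0201, e0210, e0211, e0220, e0221, e0222, e1000, e1001, e1002, e1010, e1011, e1012, e1020, e1021, e1022, e1100, e1101, e1102, e1110, e1111, e1112, e1120, e1121, e1122, e1200, e1201, e1202, e1210, e1211, e1220, e1221, e1222, e2000, e2001, e2002, e2010, e2011, e2012, e2020, e2021, e2022, e2100, e2101, e2102, e2110, e2111, e2112, e2120, e2121, e2122, e2200, e2201, e2202, e2210, e2211, e2212, e2220, e2221, e2222]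
  ring
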